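/- Let H₋, H_m, H₊ be finite-dimensional complex Hilbert spaces of nonzero dimension and H = H₋ ⊗ H_m ⊗ H₊ with the induced inner product; identify an operator on one factor with its ampliation on H. Let X₋, Y₋ be self-adjoint operators on H₋, X_m a self-adjoint operator on H_m, and X₊, Y₊ self-adjoint operators on H₊, and set X = X₋ + X_m + X₊ and Y = Y₋ + X_m + Y₊ on H. Let Ω ∈ H be a unit vector, φ ∈ ℝ, and 0 < ε ≤ 1 with Var_Ω(exp(iφX)) ≤ ε² and Var_Ω(exp(iφY)) ≤ ε². Then for every bounded operator A on H that commutes with the ampliation of X_m, |⟨Ω, exp(iφY₋) A exp(−iφX₋) Ω⟩ − ⟨Ω, exp(iφY) exp(−iφX) Ω⟩ · ⟨Ω, exp(−iφY₊) A exp(iφX₊) Ω⟩| ≤ 5 ‖A‖ ε. -/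

import Mathlib

set_option maxHeartbeats 1000000

open scoped Kronecker

noncomputable section

/-- Variance of a bounded operator in a state: `Var ψ A = ‖(A - ⟨ψ, Aψ⟩)ψ‖ ^ 2`. -/
def Var {H : Type*} [NormedAddCommGroup H] [InnerProductSpace ℂ H]
    (ψ : H) (A : H →L[ℂ] H) : ℝ :=
  ‖A ψ - (inner ℂ ψ (A ψ) : ℂ) • ψ‖ ^ 2

/-- The Hilbert space `H₋ ⊗ H_m ⊗ H₊`, realized concretely as
`EuclideanSpace ℂ (Fin n × Fin m × Fin k)`. -/
abbrev TripleSpace (n m k : ℕ) := EuclideanSpace ℂ (Fin n × Fin m × Fin k)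

/-- Ampliation of an operator on the left factor `H₋` to `H₋ ⊗ H_m ⊗ H₊`. -/
def ampL {n m k : ℕ} (A : Matrix (Fin n) (Fin n) ℂ) :
    TripleSpace n m k →L[ℂ] TripleSpace n m k :=
  Matrix.toEuclideanCLM (𝕜 := ℂ) (A ⊗ₖ (1 : Matrix (Fin m × Fin k) (Fin m × Fin k) ℂ))

/-- Ampliation of an operator on the middle factor `H_m` to `H₋ ⊗ H_m ⊗ H₊`. -/
def ampM {n m k : ℕ} (B : Matrix (Fin m) (Fin m) ℂ) :
    TripleSpace n m k →L[ℂ] TripleSpace n m k :=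
  Matrix.toEuclideanCLM (𝕜 := ℂ)
    ((1 : Matrix (Fin n) (Fin n) ℂ) ⊗ₖ (B ⊗ₖ (1 : Matrix (Fin k) (Fin k) ℂ)))

/-- Ampliation of an operator on the right factor `H₊` to `H₋ ⊗ H_m ⊗ H₊`. -/
def ampR {n m k : ℕ} (C : Matrix (Fin k) (Fin k) ℂ) :
    TripleSpace n m k →L[ℂ] TripleSpace n m k :=
  Matrix.toEuclideanCLM (𝕜 := ℂ)
    ((1 : Matrix (Fin n) (Fin n) ℂ) ⊗ₖ ((1 : Matrix (Fin m) (Fin m) ℂ) ⊗ₖ C))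

/-- The operator norm of a matrix, acting on the corresponding Euclidean space. -/
def opNorm {p : ℕ} (A : Matrix (Fin p) (Fin p) ℂ) : ℝ :=
  ‖Matrix.toEuclideanCLM (𝕜 := ℂ) A‖

/-! Write `U = exp(iφX)` and `V = exp(iφY)`. The three summands of `X` (and of `Y`) commute, so
`U` and `V` split into left, middle and right exponentials, and since `A` commutes with `X_m` this
gives `exp(iφY₋) A exp(-iφX₋) = V B U⋆` with `B = exp(-iφY₊) A exp(iφX₊)`, where `‖B‖ = ‖A‖`.
For a unitary `W`, `Var_Ω(W⋆) = Var_Ω(W)`, so small variance puts `U⋆Ω` and `V⋆Ω` within `ε` of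
multiples of `Ω`; replacing them by these multiples factorizes `⟪Ω, V B U⋆ Ω⟫` as
`⟪Ω, V U⋆ Ω⟫ ⟪Ω, B Ω⟫` up to an error `4 ‖B‖ ε`. -/

open NormedSpace
open scoped Matrix InnerProductSpace

section Variance

variable {H : Type*} [NormedAddCommGroup H] [InnerProductSpace ℂ H]

lemma norm_sub_inner_smul_sq {ψ : H} (hψ : ‖ψ‖ = 1) (x : H) :
    ‖x - ⟪ψ, x⟫_ℂ • ψ‖ ^ 2 = ‖x‖ ^ 2 - ‖⟪ψ, x⟫_ℂ‖ ^ 2 := by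
  have hre : RCLike.re ⟪x, ⟪ψ, x⟫_ℂ • ψ⟫_ℂ = ‖⟪ψ, x⟫_ℂ‖ ^ 2 := by
    rw [inner_smul_right, ← inner_conj_symm x ψ, RCLike.mul_conj]
    norm_cast
  rw [@norm_sub_sq ℂ, hre, norm_smul, hψ]
  ring

lemma var_eq_norm_sq_sub {ψ : H} (hψ : ‖ψ‖ = 1) (A : H →L[ℂ] H) :
    Var ψ A = ‖A ψ‖ ^ 2 - ‖⟪ψ, A ψ⟫_ℂ‖ ^ 2 :=
  norm_sub_inner_smul_sq hψ (A ψ)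

lemma var_star_of_mem_unitary [CompleteSpace H] {ψ : H} (hψ : ‖ψ‖ = 1)
    {U : H →L[ℂ] H} (hU : U ∈ unitary (H →L[ℂ] H)) : Var ψ (star U) = Var ψ U := by
  have hinner : ⟪ψ, star U ψ⟫_ℂ = starRingEnd ℂ ⟪ψ, U ψ⟫_ℂ := by
    rw [ContinuousLinearMap.star_eq_adjoint, ContinuousLinearMap.adjoint_inner_right,
      inner_conj_symm]
  rw [var_eq_norm_sq_sub hψ, var_eq_norm_sq_sub hψ, hinner, RCLike.norm_conj,
    ContinuousLinearMap.norm_map_of_mem_unitary (Unitary.star_mem hU),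
    ContinuousLinearMap.norm_map_of_mem_unitary hU]

lemma norm_sub_inner_smul_le_of_var_le {ψ : H} {A : H →L[ℂ] H} {ε : ℝ} (hε : 0 ≤ ε)
    (hA : Var ψ A ≤ ε ^ 2) : ‖A ψ - ⟪ψ, A ψ⟫_ℂ • ψ‖ ≤ ε :=
  (pow_le_pow_iff_left₀ (norm_nonneg _) hε two_ne_zero).mp hA

end Variance

section Covariance

variable {H : Type*} [NormedAddCommGroup H] [InnerProductSpace ℂ H]

lemma norm_inner_map_sub_inner_map_le (B : H →L[ℂ] H) (a a₀ b b₀ : H) :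
    ‖⟪b, B a⟫_ℂ - ⟪b₀, B a₀⟫_ℂ‖ ≤ ‖B‖ * (‖b - b₀‖ * ‖a‖ + ‖b₀‖ * ‖a - a₀‖) := by
  have hsplit : ⟪b, B a⟫_ℂ - ⟪b₀, B a₀⟫_ℂ = ⟪b - b₀, B a⟫_ℂ + ⟪b₀, B (a - a₀)⟫_ℂ := by
    rw [map_sub, inner_sub_left, inner_sub_right]
    ring
  have hBa : ‖B a‖ ≤ ‖B‖ * ‖a‖ := B.le_opNorm a
  have hBa' : ‖B (a - a₀)‖ ≤ ‖B‖ * ‖a - a₀‖ := B.le_opNorm _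
  calc ‖⟪b, B a⟫_ℂ - ⟪b₀, B a₀⟫_ℂ‖
      ≤ ‖b - b₀‖ * ‖B a‖ + ‖b₀‖ * ‖B (a - a₀)‖ := by
        rw [hsplit]
        exact (norm_add_le _ _).trans
          (add_le_add (norm_inner_le_norm _ _) (norm_inner_le_norm _ _))
    _ ≤ ‖b - b₀‖ * (‖B‖ * ‖a‖) + ‖b₀‖ * (‖B‖ * ‖a - a₀‖) := by gcongr
    _ = ‖B‖ * (‖b - b₀‖ * ‖a‖ + ‖b₀‖ * ‖a - a₀‖) := by ring

lemma norm_inner_map_sub_inner_mul_inner_le {Ω a b : H} (hΩ : ‖Ω‖ = 1) (ha : ‖a‖ ≤ 1)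
    (hb : ‖b‖ ≤ 1) {ε : ℝ} (haΩ : ‖a - ⟪Ω, a⟫_ℂ • Ω‖ ≤ ε) (hbΩ : ‖b - ⟪Ω, b⟫_ℂ • Ω‖ ≤ ε)
    (B : H →L[ℂ] H) :
    ‖⟪b, B a⟫_ℂ - ⟪b, a⟫_ℂ * ⟪Ω, B Ω⟫_ℂ‖ ≤ 4 * ‖B‖ * ε := by
  set a₀ := ⟪Ω, a⟫_ℂ • Ω
  set b₀ := ⟪Ω, b⟫_ℂ • Ω
  have hε : 0 ≤ ε := (norm_nonneg _).trans haΩ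
  have hb₀ : ‖b₀‖ ≤ 1 := by
    rw [norm_smul, hΩ, mul_one]
    exact (norm_inner_le_norm _ _).trans (by rw [hΩ, one_mul]; exact hb)
  have hc : ‖⟪Ω, B Ω⟫_ℂ‖ ≤ ‖B‖ := by
    simpa [hΩ] using (norm_inner_le_norm Ω (B Ω)).trans (mul_le_mul_of_nonneg_left
      (B.le_opNorm Ω) (norm_nonneg Ω))
  have hfactor : ⟪b₀, B a₀⟫_ℂ = ⟪b₀, a₀⟫_ℂ * ⟪Ω, B Ω⟫_ℂ := by
    simp only [b₀, a₀, map_smul, inner_smul_left, inner_smul_right, inner_self_eq_norm_sq_to_K,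
      hΩ, RCLike.ofReal_one, one_pow, mul_one]
    ring
  have hperturb : ∀ C : H →L[ℂ] H, ‖⟪b, C a⟫_ℂ - ⟪b₀, C a₀⟫_ℂ‖ ≤ ‖C‖ * (2 * ε) := fun C =>
    (norm_inner_map_sub_inner_map_le C a a₀ b b₀).trans (by
      gcongr
      linarith [mul_le_mul hbΩ ha (norm_nonneg a) hε,
        mul_le_mul hb₀ haΩ (norm_nonneg _) zero_le_one])
  have hone : ‖⟪b, a⟫_ℂ - ⟪b₀, a₀⟫_ℂ‖ ≤ 2 * ε := by
    simpa using (hperturb (ContinuousLinearMap.id ℂ H)).trans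
      (mul_le_of_le_one_left (by positivity) ContinuousLinearMap.norm_id_le)
  calc ‖⟪b, B a⟫_ℂ - ⟪b, a⟫_ℂ * ⟪Ω, B Ω⟫_ℂ‖
      = ‖(⟪b, B a⟫_ℂ - ⟪b₀, B a₀⟫_ℂ) - (⟪b, a⟫_ℂ - ⟪b₀, a₀⟫_ℂ) * ⟪Ω, B Ω⟫_ℂ‖ := by
        rw [hfactor]
        congr 1
        ring
    _ ≤ ‖B‖ * (2 * ε) + 2 * ε * ‖B‖ := by
        refine (norm_sub_le _ _).trans (add_le_add (hperturb B) ?_)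
        rw [norm_mul]
        exact mul_le_mul hone hc (norm_nonneg _) (by positivity)
    _ = 4 * ‖B‖ * ε := by ring

end Covariance

section UnitaryCovariance

variable {H : Type*} [NormedAddCommGroup H] [InnerProductSpace ℂ H] [CompleteSpace H]

lemma norm_star_apply_sub_inner_smul_le {Ω : H} (hΩ : ‖Ω‖ = 1) {U : H →L[ℂ] H}
    (hU : U ∈ unitary (H →L[ℂ] H)) {ε : ℝ} (hε : 0 ≤ ε) (hUε : Var Ω U ≤ ε ^ 2) :
    ‖star U Ω - ⟪Ω, star U Ω⟫_ℂ • Ω‖ ≤ ε :=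
  norm_sub_inner_smul_le_of_var_le hε ((var_star_of_mem_unitary hΩ hU).trans_le hUε)

lemma norm_inner_mul_mul_star_sub_le {Ω : H} (hΩ : ‖Ω‖ = 1) {U V : H →L[ℂ] H}
    (hU : U ∈ unitary (H →L[ℂ] H)) (hV : V ∈ unitary (H →L[ℂ] H)) {ε : ℝ} (hε : 0 ≤ ε)
    (hUε : Var Ω U ≤ ε ^ 2) (hVε : Var Ω V ≤ ε ^ 2) (B : H →L[ℂ] H) :
    ‖⟪Ω, (V * B * star U) Ω⟫_ℂ - ⟪Ω, (V * star U) Ω⟫_ℂ * ⟪Ω, B Ω⟫_ℂ‖ ≤ 4 * ‖B‖ * ε := by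
  have hV_inner : ∀ x, ⟪Ω, V x⟫_ℂ = ⟪star V Ω, x⟫_ℂ := fun x => by
    rw [ContinuousLinearMap.star_eq_adjoint, ContinuousLinearMap.adjoint_inner_left]
  have hnorm : ∀ W ∈ unitary (H →L[ℂ] H), ‖star W Ω‖ ≤ 1 := fun W hW => by
    rw [ContinuousLinearMap.norm_map_of_mem_unitary (Unitary.star_mem hW), hΩ]
  simpa only [mul_apply_eq_comp, hV_inner] using
    norm_inner_map_sub_inner_mul_inner_le hΩ (hnorm U hU) (hnorm V hV)
      (norm_star_apply_sub_inner_smul_le hΩ hU hε hUε)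
      (norm_star_apply_sub_inner_smul_le hΩ hV hε hVε) B

end UnitaryCovariance

section Exponential

variable {𝔸 : Type*} [NormedRing 𝔸] [NormedAlgebra ℂ 𝔸]

lemma star_exp_smul [StarRing 𝔸] [ContinuousStar 𝔸] [StarModule ℂ 𝔸] {T : 𝔸}
    (hT : IsSelfAdjoint T) {c : ℂ} (hc : c ∈ skewAdjoint ℂ) :
    star (exp (c • T)) = exp (-c • T) := by
  rw [star_exp, star_smul, skewAdjoint.mem_iff.mp hc, hT.star_eq]

variable [CompleteSpace 𝔸]

lemma exp_smul_mul_exp_neg_smul (c : ℂ) (T : 𝔸) : exp (c • T) * exp (-c • T) = 1 := by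
  let +nondep : NormedAlgebra ℚ 𝔸 := .restrictScalars ℚ ℂ 𝔸
  rw [← exp_add_of_commute ((Commute.refl T).smul_left c |>.smul_right (-c)), neg_smul,
    add_neg_cancel, exp_zero]

lemma exp_smul_add_add {L M R : 𝔸} (hLM : Commute L M) (hLR : Commute L R) (hMR : Commute M R)
    (c : ℂ) : exp (c • (L + M + R)) = exp (c • L) * exp (c • M) * exp (c • R) := by
  let +nondep : NormedAlgebra ℚ 𝔸 := .restrictScalars ℚ ℂ 𝔸
  rw [smul_add, exp_add_of_commute (((hLR.add_left hMR).smul_left c).smul_right c), smul_add,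
    exp_add_of_commute ((hLM.smul_left c).smul_right c)]

lemma exp_smul_mul_mul_exp_neg_smul_eq {L M R L' R' X : 𝔸} (hLM : Commute L M)
    (hLR : Commute L R) (hMR : Commute M R) (hL'M : Commute L' M) (hL'R' : Commute L' R')
    (hMR' : Commute M R') (hXM : Commute X M) (c : ℂ) :
    exp (c • L') * X * exp (-c • L) =
      exp (c • (L' + M + R')) * (exp (-c • R') * X * exp (c • R)) * exp (-c • (L + M + R)) := by
  have hL : exp (-c • L) * exp (c • L) = 1 := by
    simpa only [neg_neg] using exp_smul_mul_exp_neg_smul (-c) L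
  have hR' : exp (c • R') * exp (-c • R') = 1 := exp_smul_mul_exp_neg_smul c R'
  have hXM' : X * exp (c • M) = exp (c • M) * X := ((hXM.smul_right c).exp_right).eq
  have hmul : exp (c • L') * X * exp (-c • L) * exp (c • (L + M + R)) =
      exp (c • (L' + M + R')) * (exp (-c • R') * X * exp (c • R)) := by
    rw [exp_smul_add_add hLM hLR hMR, exp_smul_add_add hL'M hL'R' hMR']
    calc _ = exp (c • L') * X * (exp (-c • L) * exp (c • L)) * exp (c • M) * exp (c • R) := by
          simp only [mul_assoc]
      _ = exp (c • L') * (X * exp (c • M)) * exp (c • R) := by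
          rw [hL, mul_one]; simp only [mul_assoc]
      _ = exp (c • L') * exp (c • M) * (exp (c • R') * exp (-c • R')) * X * exp (c • R) := by
          rw [hXM', hR', mul_one]; simp only [mul_assoc]
      _ = _ := by simp only [mul_assoc]
  rw [← hmul, mul_assoc _ (exp (c • (L + M + R))), exp_smul_mul_exp_neg_smul, mul_one]

lemma exp_smul_mem_unitary [StarRing 𝔸] [ContinuousStar 𝔸] [StarModule ℂ 𝔸] {T : 𝔸}
    (hT : IsSelfAdjoint T) {c : ℂ} (hc : c ∈ skewAdjoint ℂ) : exp (c • T) ∈ unitary 𝔸 :=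
  let +nondep : NormedAlgebra ℚ 𝔸 := .restrictScalars ℚ ℂ 𝔸
  exp_mem_unitary_of_mem_skewAdjoint (hT.smul_mem_skewAdjoint hc)

end Exponential

section Transfer

variable {H : Type*} [NormedAddCommGroup H] [InnerProductSpace ℂ H] [CompleteSpace H]

theorem norm_inner_exp_transfer_sub_le {L M R L' R' X : H →L[ℂ] H} (hL : IsSelfAdjoint L)
    (hM : IsSelfAdjoint M) (hR : IsSelfAdjoint R) (hL' : IsSelfAdjoint L')
    (hR' : IsSelfAdjoint R') (hLM : Commute L M) (hLR : Commute L R) (hMR : Commute M R)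
    (hL'M : Commute L' M) (hL'R' : Commute L' R') (hMR' : Commute M R') (hXM : Commute X M)
    {c : ℂ} (hc : c ∈ skewAdjoint ℂ) {Ω : H} (hΩ : ‖Ω‖ = 1) {ε : ℝ} (hε : 0 ≤ ε)
    (hvarX : Var Ω (exp (c • (L + M + R))) ≤ ε ^ 2)
    (hvarY : Var Ω (exp (c • (L' + M + R'))) ≤ ε ^ 2) :
    ‖⟪Ω, (exp (c • L') * X * exp (-c • L)) Ω⟫_ℂ -
        ⟪Ω, (exp (c • (L' + M + R')) * exp (-c • (L + M + R))) Ω⟫_ℂ *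
          ⟪Ω, (exp (-c • R') * X * exp (c • R)) Ω⟫_ℂ‖ ≤ 4 * ‖X‖ * ε := by
  have hneg : -c ∈ skewAdjoint ℂ := neg_mem hc
  have hU := exp_smul_mem_unitary ((hL.add hM).add hR) hc
  have hV := exp_smul_mem_unitary ((hL'.add hM).add hR') hc
  have hB : ‖exp (-c • R') * X * exp (c • R)‖ = ‖X‖ := by
    rw [CStarRing.norm_mul_mem_unitary _ (exp_smul_mem_unitary hR hc),
      CStarRing.norm_mem_unitary_mul _ (exp_smul_mem_unitary hR' hneg)]
  rw [exp_smul_mul_mul_exp_neg_smul_eq hLM hLR hMR hL'M hL'R' hMR' hXM, ← hB,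
    ← star_exp_smul ((hL.add hM).add hR) hc]
  exact norm_inner_mul_mul_star_sub_le hΩ hU hV hε hvarX hvarY _

end Transfer

section Ampliation

theorem Matrix.IsHermitian.kronecker {R l p : Type*} [CommSemiring R] [StarRing R]
    {A : Matrix l l R} {B : Matrix p p R} (hA : A.IsHermitian) (hB : B.IsHermitian) :
    (A ⊗ₖ B).IsHermitian := by
  rw [Matrix.IsHermitian, Matrix.conjTranspose_kronecker, hA.eq, hB.eq]

theorem Commute.kronecker {R l p : Type*} [CommSemiring R] [Fintype l] [Fintype p]
    {A A' : Matrix l l R} {B B' : Matrix p p R} (hA : Commute A A') (hB : Commute B B') :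
    Commute (A ⊗ₖ B) (A' ⊗ₖ B') := by
  rw [Commute, SemiconjBy, ← Matrix.mul_kronecker_mul, ← Matrix.mul_kronecker_mul, hA.eq, hB.eq]

variable {n m k : ℕ}

lemma isSelfAdjoint_ampL {A : Matrix (Fin n) (Fin n) ℂ} (hA : A.IsHermitian) :
    IsSelfAdjoint (ampL (m := m) (k := k) A) :=
  (hA.kronecker Matrix.isHermitian_one).isSelfAdjoint.map Matrix.toEuclideanCLM

lemma isSelfAdjoint_ampM {B : Matrix (Fin m) (Fin m) ℂ} (hB : B.IsHermitian) :
    IsSelfAdjoint (ampM (n := n) (k := k) B) :=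
  (Matrix.isHermitian_one.kronecker (hB.kronecker Matrix.isHermitian_one)).isSelfAdjoint.map
    Matrix.toEuclideanCLM

lemma isSelfAdjoint_ampR {C : Matrix (Fin k) (Fin k) ℂ} (hC : C.IsHermitian) :
    IsSelfAdjoint (ampR (n := n) (m := m) C) :=
  (Matrix.isHermitian_one.kronecker (Matrix.isHermitian_one.kronecker hC)).isSelfAdjoint.map
    Matrix.toEuclideanCLM

lemma commute_ampL_ampM (A : Matrix (Fin n) (Fin n) ℂ) (B : Matrix (Fin m) (Fin m) ℂ) :
    Commute (ampL (k := k) A) (ampM B) := by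
  rw [ampL, ← Matrix.one_kronecker_one]
  exact ((Commute.one_right A).kronecker ((Commute.one_left B).kronecker (.refl 1))).map _

lemma commute_ampL_ampR (A : Matrix (Fin n) (Fin n) ℂ) (C : Matrix (Fin k) (Fin k) ℂ) :
    Commute (ampL (m := m) A) (ampR C) := by
  rw [ampL, ← Matrix.one_kronecker_one]
  exact ((Commute.one_right A).kronecker ((Commute.refl 1).kronecker (.one_left C))).map _

lemma commute_ampM_ampR (B : Matrix (Fin m) (Fin m) ℂ) (C : Matrix (Fin k) (Fin k) ℂ) :
    Commute (ampM (n := n) B) (ampR C) :=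
  ((Commute.refl 1).kronecker ((Commute.one_right B).kronecker (.one_left C))).map _

end Ampliation

theorem transfer_left_to_right_general (n m k : ℕ)
    (Xm : Matrix (Fin m) (Fin m) ℂ)
    (Xminus Yminus : Matrix (Fin n) (Fin n) ℂ)
    (Xplus Yplus : Matrix (Fin k) (Fin k) ℂ)
    (hXm : Xm.IsHermitian) (hXminus : Xminus.IsHermitian) (hYminus : Yminus.IsHermitian)
    (hXplus : Xplus.IsHermitian) (hYplus : Yplus.IsHermitian)
    (Ω : TripleSpace n m k) (hΩ : ‖Ω‖ = 1) (φ : ℝ) (ε : ℝ) (hε0 : 0 < ε)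
    (hvarX : Var Ω (NormedSpace.exp ((Complex.I * (φ : ℂ)) •
        (ampL Xminus + ampM Xm + ampR Xplus))) ≤ ε ^ 2)
    (hvarY : Var Ω (NormedSpace.exp ((Complex.I * (φ : ℂ)) •
        (ampL Yminus + ampM Xm + ampR Yplus))) ≤ ε ^ 2)
    (A : TripleSpace n m k →L[ℂ] TripleSpace n m k) (hA : A * ampM Xm = ampM Xm * A) :
    ‖((inner ℂ Ω ((NormedSpace.exp ((Complex.I * (φ : ℂ)) • ampL Yminus) * A *
            NormedSpace.exp (-(Complex.I * (φ : ℂ)) • ampL Xminus) :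
              TripleSpace n m k →L[ℂ] TripleSpace n m k) Ω) : ℂ) -
          (inner ℂ Ω ((NormedSpace.exp ((Complex.I * (φ : ℂ)) •
              (ampL Yminus + ampM Xm + ampR Yplus)) *
            NormedSpace.exp (-(Complex.I * (φ : ℂ)) •
              (ampL Xminus + ampM Xm + ampR Xplus)) :
              TripleSpace n m k →L[ℂ] TripleSpace n m k) Ω) : ℂ) *
          (inner ℂ Ω ((NormedSpace.exp (-(Complex.I * (φ : ℂ)) • ampR Yplus) * A *
            NormedSpace.exp ((Complex.I * (φ : ℂ)) • ampR Xplus) :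
              TripleSpace n m k →L[ℂ] TripleSpace n m k) Ω) : ℂ))‖
      ≤ 5 * ‖A‖ * ε := by
  have hc : Complex.I * (φ : ℂ) ∈ skewAdjoint ℂ := by
    rw [skewAdjoint.mem_iff]
    simp
  have h4 := norm_inner_exp_transfer_sub_le (isSelfAdjoint_ampL hXminus) (isSelfAdjoint_ampM hXm)
    (isSelfAdjoint_ampR hXplus) (isSelfAdjoint_ampL hYminus) (isSelfAdjoint_ampR hYplus)
    (commute_ampL_ampM _ _) (commute_ampL_ampR _ _) (commute_ampM_ampR _ _)
    (commute_ampL_ampM _ _) (commute_ampL_ampR _ _) (commute_ampM_ampR _ _) hA hc hΩ hε0.le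
    hvarX hvarY
  exact h4.trans (by gcongr; norm_num)

/-- Quantitative tensor-product form of Lemma 4.6 of Bachmann–Bols–De Roeck–Fraas: expectation
values involving the left boundary operators `X₋, Y₋` are transferred to expectation values
involving the right boundary operators `X₊, Y₊`, for any `A` commuting with the middle
charge `X_m`. -/
theorem transfer_left_to_right (n m k : ℕ) (hn : 0 < n) (hm : 0 < m) (hk : 0 < k)
    (Xm : Matrix (Fin m) (Fin m) ℂ)
    (Xminus Yminus : Matrix (Fin n) (Fin n) ℂ)
    (Xplus Yplus : Matrix (Fin k) (Fin k) ℂ)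
    (hXm : Xm.IsHermitian) (hXminus : Xminus.IsHermitian) (hYminus : Yminus.IsHermitian)
    (hXplus : Xplus.IsHermitian) (hYplus : Yplus.IsHermitian)
    (Ω : TripleSpace n m k) (hΩ : ‖Ω‖ = 1) (φ : ℝ) (ε : ℝ) (hε0 : 0 < ε) (hε1 : ε ≤ 1)
    (hvarX : Var Ω (NormedSpace.exp ((Complex.I * (φ : ℂ)) •
        (ampL Xminus + ampM Xm + ampR Xplus))) ≤ ε ^ 2)
    (hvarY : Var Ω (NormedSpace.exp ((Complex.I * (φ : ℂ)) •
        (ampL Yminus + ampM Xm + ampR Yplus))) ≤ ε ^ 2)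
    (A : TripleSpace n m k →L[ℂ] TripleSpace n m k) (hA : A * ampM Xm = ampM Xm * A) :
    ‖((inner ℂ Ω ((NormedSpace.exp ((Complex.I * (φ : ℂ)) • ampL Yminus) * A *
            NormedSpace.exp (-(Complex.I * (φ : ℂ)) • ampL Xminus) :
              TripleSpace n m k →L[ℂ] TripleSpace n m k) Ω) : ℂ) -
          (inner ℂ Ω ((NormedSpace.exp ((Complex.I * (φ : ℂ)) •
              (ampL Yminus + ampM Xm + ampR Yplus)) *
            NormedSpace.exp (-(Complex.I * (φ : ℂ)) •
              (ampL Xminus + ampM Xm + ampR Xplus)) :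
              TripleSpace n m k →L[ℂ] TripleSpace n m k) Ω) : ℂ) *
          (inner ℂ Ω ((NormedSpace.exp (-(Complex.I * (φ : ℂ)) • ampR Yplus) * A *
            NormedSpace.exp ((Complex.I * (φ : ℂ)) • ampR Xplus) :
              TripleSpace n m k →L[ℂ] TripleSpace n m k) Ω) : ℂ))‖
      ≤ 5 * ‖A‖ * ε :=
  transfer_left_to_right_general n m k Xm Xminus Yminus Xplus Yplus hXm hXminus hYminus hXplus
    hYplus Ω hΩ φ ε hε0 hvarX hvarY A hA
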